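/- Let H and K be complex Hilbert spaces, let U : H → K be semiunitary (unitary or antiunitary), and let h be any function from the nonzero vectors of H to the nonzero vectors of K. Then the following are equivalent: (i) for every nonzero ψ ∈ H and every closed subspace S of K, e_K(h(ψ), S) = e_K(U ψ, S); (ii) there exists a function c from the nonzero vectors of H to ℂ \ {0} such that h(ψ) = c(ψ) • U ψ for all nonzero ψ. (The ∼-equivalence class of U among point maps consists exactly of the pointwise nonzero-scalar multiples of U.) -/

import Mathlib

/-- The quantum evaluation `e(ψ, S) = ‖P_S ψ‖² / ‖ψ‖²` for a closed subspace `S`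
of a complex Hilbert space. -/
noncomputable def qeval {H : Type*} [NormedAddCommGroup H] [InnerProductSpace ℂ H]
    [CompleteSpace H] (ψ : H) (S : Submodule ℂ H) (hS : IsClosed (S : Set H)) : ℝ :=
  letI : CompleteSpace S := hS.completeSpace_coe
  ‖(S.orthogonalProjection ψ : H)‖ ^ 2 / ‖ψ‖ ^ 2

/-! Two nonzero vectors have the same quantum evaluation on every closed subspace exactly when
they span the same ray: evaluating on the line through one of them gives `1`, and evaluation `1`
on a subspace forces membership by Pythagoras. Semiunitary maps send nonzero vectors to nonzero
vectors, so the theorem is this fact applied pointwise. -/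

section QuantumEvaluation

variable {E : Type*} [NormedAddCommGroup E] [InnerProductSpace ℂ E] [CompleteSpace E]

theorem qeval_smul {c : ℂ} (hc : c ≠ 0) (ψ : E) (S : Submodule ℂ E)
    (hS : IsClosed (S : Set E)) : qeval (c • ψ) S hS = qeval ψ S hS := by
  have : CompleteSpace S := hS.completeSpace_coe
  simp only [qeval, map_smul, Submodule.coe_smul, norm_smul, mul_pow]
  exact mul_div_mul_left _ _ (pow_ne_zero _ (norm_ne_zero_iff.mpr hc))

theorem qeval_eq_one_iff {ψ : E} (hψ : ψ ≠ 0) (S : Submodule ℂ E)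
    (hS : IsClosed (S : Set E)) : qeval ψ S hS = 1 ↔ ψ ∈ S := by
  have : CompleteSpace S := hS.completeSpace_coe
  have hnorm : ‖ψ‖ ^ 2 ≠ 0 := pow_ne_zero _ (norm_ne_zero_iff.mpr hψ)
  rw [S.mem_iff_norm_starProjection, qeval, div_eq_one_iff_eq hnorm, Submodule.starProjection_apply]
  exact pow_left_inj₀ (norm_nonneg _) (norm_nonneg _) two_ne_zero

theorem qeval_eq_qeval_iff_exists_smul {χ φ : E} (hχ : χ ≠ 0) (hφ : φ ≠ 0) :
    (∀ (S : Submodule ℂ E) (hS : IsClosed (S : Set E)), qeval χ S hS = qeval φ S hS) ↔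
      ∃ c : ℂ, c ≠ 0 ∧ χ = c • φ := by
  constructor
  · intro hall
    have hline : IsClosed ((ℂ ∙ φ : Submodule ℂ E) : Set E) :=
      Submodule.closed_of_finiteDimensional _
    have hφ_one : qeval φ _ hline = 1 :=
      (qeval_eq_one_iff hφ _ hline).mpr (Submodule.mem_span_singleton_self φ)
    have hχ_mem : χ ∈ ℂ ∙ φ := (qeval_eq_one_iff hχ _ hline).mp (hall _ hline ▸ hφ_one)
    obtain ⟨c, rfl⟩ := Submodule.mem_span_singleton.mp hχ_mem
    exact ⟨c, left_ne_zero_of_smul hχ, rfl⟩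
  · rintro ⟨c, hc, rfl⟩ S hS
    exact qeval_smul hc φ S hS

end QuantumEvaluation

/-- Let `U : H → K` be semiunitary (unitary or antiunitary) and let `h` be a function from
nonzero vectors of `H` to nonzero vectors of `K`.  Then `h` is state-equivalent to `U`
(i.e. `e_K(h ψ, S) = e_K(U ψ, S)` for all nonzero `ψ` and closed `S`) iff `h` is a pointwise
nonzero-scalar multiple of `U`. -/
theorem semiunitary_equiv_class
    {H K : Type*} [NormedAddCommGroup H] [InnerProductSpace ℂ H] [CompleteSpace H]
    [NormedAddCommGroup K] [InnerProductSpace ℂ K] [CompleteSpace K]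
    (U : H → K)
    (hU : (∃ U' : H ≃ₗᵢ[ℂ] K, ∀ x : H, U x = U' x) ∨
          (∃ U' : H ≃ₛₗᵢ[starRingEnd ℂ] K, ∀ x : H, U x = U' x))
    (h : {ψ : H // ψ ≠ 0} → {χ : K // χ ≠ 0}) :
    (∀ (ψ : {ψ : H // ψ ≠ 0}) (S : Submodule ℂ K) (hS : IsClosed (S : Set K)),
        qeval (h ψ : K) S hS = qeval (U ψ) S hS) ↔
      ∃ c : {ψ : H // ψ ≠ 0} → ℂ, (∀ ψ, c ψ ≠ 0) ∧
        ∀ ψ : {ψ : H // ψ ≠ 0}, (h ψ : K) = c ψ • U ψ := by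
  have hU_ne_zero : ∀ ψ : {ψ : H // ψ ≠ 0}, U ψ ≠ 0 := by
    rintro ⟨ψ, hψ⟩
    rcases hU with ⟨U', hU'⟩ | ⟨U', hU'⟩ <;> simpa [hU'] using hψ
  calc _ ↔ ∀ ψ : {ψ : H // ψ ≠ 0}, ∃ c : ℂ, c ≠ 0 ∧ (h ψ : K) = c • U ψ :=
        forall_congr' fun ψ => qeval_eq_qeval_iff_exists_smul (h ψ).2 (hU_ne_zero ψ)
    _ ↔ _ := by simp only [Classical.skolem, forall_and]
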